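/- For every finite string W over {A, X, B}, the following identities hold among open values in the tight puzzle, where concatenation is denoted by juxtaposition: (1) |AAAW| + t|W| = 0; (2) |AAXW| − t|W| = 0; (3) |AXXW| + t|W| = 0; (4) |AXAW| − t|AW| − 2t|W| = 0; (5) |ABAW| + t|AW| + t|W| = 0. -/

import Mathlib

/-!
The "tight puzzle" of Schwartz–Tabachnikov.  Strings over the alphabet `{A, X, B}`;
word list (coefficient, weight): `X (1,0)`, `XA (1,1)`, `XAA (1,1)`, `AXA (2,1)`,
`AAA (-1,1)`, `BA (-1,1)`, `ABA (-1,1)`, `XXA (-1,1)`; in a parsing the word `X` may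
never be immediately followed by the word `XA` or the word `BA`.
-/

open scoped Classical

/-- The three-letter alphabet. -/
inductive PLetter | A | X | B
deriving DecidableEq

/-- Strings over the alphabet. -/
abbrev PWord := List PLetter

/-- The tight puzzle word list. -/
def tightWords : List PWord :=
  [[PLetter.X], [PLetter.X, PLetter.A], [PLetter.X, PLetter.A, PLetter.A],
   [PLetter.A, PLetter.X, PLetter.A], [PLetter.A, PLetter.A, PLetter.A],
   [PLetter.B, PLetter.A], [PLetter.A, PLetter.B, PLetter.A],
   [PLetter.X, PLetter.X, PLetter.A]]

/-- Coefficients of the words of the tight puzzle (`AXA ↦ 2`; `AAA, BA, ABA, XXA ↦ -1`;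
`X, XA, XAA ↦ 1`). -/
def tightCoeff (w : PWord) : ℤ :=
  if w = [PLetter.A, PLetter.X, PLetter.A] then 2
  else if w = [PLetter.A, PLetter.A, PLetter.A] ∨ w = [PLetter.B, PLetter.A] ∨
      w = [PLetter.A, PLetter.B, PLetter.A] ∨ w = [PLetter.X, PLetter.X, PLetter.A] then -1
  else 1

/-- Weights of the words: the word `X` has weight `0`, all other words weight `1`. -/
def wordWt (w : PWord) : ℕ := if w = [PLetter.X] then 0 else 1

/-- The forbidden adjacency: the word `X` immediately followed by `XA` or `BA`. -/
def Bad (u v : PWord) : Prop :=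
  u = [PLetter.X] ∧ (v = [PLetter.X, PLetter.A] ∨ v = [PLetter.B, PLetter.A])

/-- The contribution `coefficient · t^weight ∈ ℤ[t]` of a parsing `L`. -/
noncomputable def parseVal (c : PWord → ℤ) (L : List PWord) : Polynomial ℤ :=
  Polynomial.C ((L.map c).prod) * Polynomial.X ^ ((L.map wordWt).sum)

/-- `L` is a parsing in the tight puzzle: all its words are on the word list and the
forbidden adjacency never occurs. -/
def TightChain (L : List PWord) : Prop :=
  (∀ w ∈ L, w ∈ tightWords) ∧ List.Chain' (fun u v => ¬ Bad u v) L

/-- The *core* of a string: what remains after deleting all leading and trailing `X`s. -/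
def core (s : PWord) : PWord :=
  ((s.dropWhile (· == PLetter.X)).reverse.dropWhile (· == PLetter.X)).reverse

/-- `L` is a parsing of the bi-infinite string `⋯XX·W·XX⋯` (with the infinitely many
padding `X`s parsed as copies of the word `X` and trimmed away): the words of `L`
concatenate to `W` up to padding by `X`s on either side, `L` neither starts nor ends
with the word `X`, and (because of the padding `X`-words on the left) the first word
of `L` is not `XA` or `BA`. -/
def IsOpenParsing (W : PWord) (L : List PWord) : Prop :=
  TightChain L ∧ core L.flatten = core W ∧
  ∀ h : L ≠ [],
    L.head h ≠ [PLetter.X] ∧ L.head h ≠ [PLetter.X, PLetter.A] ∧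
    L.head h ≠ [PLetter.B, PLetter.A] ∧ L.getLast h ≠ [PLetter.X]

/-- `(r, L)` is a parsing of the cyclic string `(W)`: reading the necklace of the
letters of `W` starting at position `r`, the words of `L` concatenate to it, the
forbidden adjacency does not occur (cyclically), and `r < (last word).length`
(so that every parsing of the necklace is counted exactly once). -/
def IsCyclicParsing (W : PWord) (r : ℕ) (L : List PWord) : Prop :=
  TightChain L ∧
  ∃ h : L ≠ [], L.flatten = W.rotate r ∧ r < (L.getLast h).length ∧
    ¬ Bad (L.getLast h) (L.head h)

/-- `L` is a parsing of the locked string `[W]`: the words of `L` concatenate exactly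
to `W`, no padding allowed. -/
def IsLockedParsing (W : PWord) (L : List PWord) : Prop :=
  TightChain L ∧ L.flatten = W

/-- The nine words of both puzzles, as a function (used to enumerate parsings). -/
def wordOf : Fin 9 → PWord :=
  ![[PLetter.X], [PLetter.X, PLetter.A], [PLetter.X, PLetter.A, PLetter.A],
    [PLetter.X, PLetter.B, PLetter.A], [PLetter.A, PLetter.X, PLetter.A],
    [PLetter.A, PLetter.A, PLetter.A], [PLetter.B, PLetter.A],
    [PLetter.A, PLetter.B, PLetter.A], [PLetter.X, PLetter.X, PLetter.A]]

/-- The open value `|W| ∈ ℤ[t]`: the sum of `coefficient · t^weight` over all parsings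
of the bi-infinite string `⋯XX·W·XX⋯` (any such parsing consists of at most
`W.length + 2` words). -/
noncomputable def openVal (W : PWord) : Polynomial ℤ :=
  ∑ k ∈ Finset.range (W.length + 3), ∑ f : Fin k → Fin 9,
    if IsOpenParsing W ((List.ofFn f).map wordOf) then
      parseVal tightCoeff ((List.ofFn f).map wordOf)
    else 0

/-- The cyclic value `|(W)| ∈ ℤ[t]`: the sum of `coefficient · t^weight` over all
parsings of the cyclic string `(W)`. -/
noncomputable def cycVal (W : PWord) : Polynomial ℤ :=
  ∑ r ∈ Finset.range W.length, ∑ k ∈ Finset.range (W.length + 1), ∑ f : Fin k → Fin 9,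
    if IsCyclicParsing W r ((List.ofFn f).map wordOf) then
      parseVal tightCoeff ((List.ofFn f).map wordOf)
    else 0

/-- The locked value `|[W]| ∈ ℤ[t]`: the sum of `coefficient · t^weight` over all
parsings whose concatenation is exactly `W`. -/
noncomputable def lockVal (W : PWord) : Polynomial ℤ :=
  ∑ k ∈ Finset.range (W.length + 1), ∑ f : Fin k → Fin 9,
    if IsLockedParsing W ((List.ofFn f).map wordOf) then
      parseVal tightCoeff ((List.ofFn f).map wordOf)
    else 0


/-!
An open parsing of `W` starts with one of the words `XAA, AXA, AAA, ABA, XXA` (the padding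
`X`-words on the left forbid `XA` and `BA`), and what follows it is a locked parsing of the rest
of the core of `W`. So `|W|` is a fixed combination of locked values of suffixes of the core.
Locked values satisfy a first-word recursion whose only memory is whether the previous word was
`X`. Expanding both sides of each identity with these recursions reduces everything to two
formulas for `|W|` in terms of locked values of `Z`, the string `W` without its trailing `X`s;
both follow by induction on `Z`.
-/

namespace List

variable {α : Type*} (p : α → Bool)

theorem rdropWhile_cons (a : α) (l : List α) :
    (a :: l).rdropWhile p = if p a ∧ l.rdropWhile p = [] then [] else a :: l.rdropWhile p := by
  rw [← singleton_append, rdropWhile, reverse_append, dropWhile_append, rdropWhile]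
  by_cases h : l.reverse.dropWhile p = [] <;> by_cases ha : p a <;> simp [h, ha]

theorem rdropWhile_dropWhile (l : List α) :
    (l.dropWhile p).rdropWhile p = (l.rdropWhile p).dropWhile p := by
  induction l with
  | nil => simp
  | cons a l ih =>
    by_cases ha : p a
    · rw [dropWhile_cons_of_pos ha, ih, rdropWhile_cons]
      split_ifs with h
      · simp [h.2]
      · rw [dropWhile_cons_of_pos ha]
    · rw [dropWhile_cons_of_neg ha, rdropWhile_cons, if_neg (by simp [ha]),
        dropWhile_cons_of_neg ha]

theorem getLast?_dropWhile {l : List α} (h : l.dropWhile p ≠ []) :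
    (l.dropWhile p).getLast? = l.getLast? := by
  obtain ⟨u, hu⟩ := dropWhile_suffix p (l := l)
  obtain ⟨a, ha⟩ := Option.ne_none_iff_exists'.1 (mt getLast?_eq_none_iff.1 h)
  conv_rhs => rw [← hu]
  rw [getLast?_append, ha, Option.some_or]

theorem append_eq_iff_prefix {l₁ l₂ l : List α} :
    l₁ ++ l₂ = l ↔ l₁ <+: l ∧ l₂ = l.drop l₁.length := by
  constructor
  · rintro rfl
    exact ⟨prefix_append _ _, drop_left.symm⟩
  · rintro ⟨h, rfl⟩
    exact prefix_iff_eq_append.1 h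

end List

namespace TightPuzzle

open PLetter

local notation "t" => (Polynomial.X : Polynomial ℤ)

noncomputable def parsingSum (n : ℕ) (P : List PWord → Prop) : Polynomial ℤ :=
  ∑ k ∈ Finset.range n, ∑ f : Fin k → Fin 9,
    if P ((List.ofFn f).map wordOf) then parseVal tightCoeff ((List.ofFn f).map wordOf) else 0

theorem parsingSum_congr {P Q : List PWord → Prop} (h : ∀ L, P L ↔ Q L) (n : ℕ) :
    parsingSum n P = parsingSum n Q := by
  simp only [parsingSum, h]

theorem parsingSum_eq_zero {P : List PWord → Prop} (h : ∀ L, ¬P L) (n : ℕ) :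
    parsingSum n P = 0 := by
  simp [parsingSum, h]

theorem parseVal_cons (w : PWord) (L : List PWord) :
    parseVal tightCoeff (w :: L) = .C (tightCoeff w) * t ^ wordWt w * parseVal tightCoeff L := by
  simp only [parseVal, List.map_cons, List.prod_cons, List.sum_cons, pow_add, map_mul]
  ring

theorem parsingSum_succ (n : ℕ) (P : List PWord → Prop) :
    parsingSum (n + 1) P = (if P [] then 1 else 0) +
      ∑ i : Fin 9, .C (tightCoeff (wordOf i)) * t ^ wordWt (wordOf i) *
        parsingSum n (fun L => P (wordOf i :: L)) := by
  rw [parsingSum, Finset.sum_range_succ', add_comm]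
  congr 1
  · simp [parseVal]
  · simp_rw [parsingSum, Finset.mul_sum]
    rw [Finset.sum_comm]
    refine Finset.sum_congr rfl fun k _ => ?_
    rw [← (Fin.consEquiv fun _ => Fin 9).sum_comp, Fintype.sum_prod_type]
    refine Finset.sum_congr rfl fun i _ => Finset.sum_congr rfl fun g _ => ?_
    simp only [Fin.consEquiv_apply, List.ofFn_succ, Fin.cons_zero, Fin.cons_succ,
      List.map_cons, parseVal_cons]
    split_ifs <;> simp

theorem parsingSum_eq_of_length_lt {P : List PWord → Prop} {n m : ℕ} (hnm : n ≤ m)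
    (h : ∀ L, P L → L.length < n) : parsingSum m P = parsingSum n P := by
  rw [parsingSum, ← Finset.sum_range_add_sum_Ico _ hnm, parsingSum, add_eq_left]
  refine Finset.sum_eq_zero fun k hk => Finset.sum_eq_zero fun f _ => if_neg fun hP => ?_
  have := h _ hP
  simp only [List.length_map, List.length_ofFn] at this
  have := (Finset.mem_Ico.1 hk).1
  omega

theorem tightChain_iff (L : List PWord) :
    TightChain L ↔ (∀ w ∈ L, w ∈ tightWords) ∧ L.IsChain (fun u v => ¬Bad u v) :=
  Iff.rfl

theorem ne_nil_of_mem_tightWords {w : PWord} (hw : w ∈ tightWords) : w ≠ [] := by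
  fin_cases hw <;> simp

theorem getLast?_eq_some_X_iff {w : PWord} (hw : w ∈ tightWords) :
    w.getLast? = some X ↔ w = [X] := by
  fin_cases hw <;> simp

theorem dropWhile_X_ne_nil {w : PWord} (hw : w ∈ tightWords) (hX : w ≠ [X]) :
    w.dropWhile (· == X) ≠ [] := by
  fin_cases hw <;> simp_all

theorem getLast?_flatten_eq_some_X_iff {L : List PWord} (hL : ∀ w ∈ L, w ∈ tightWords) :
    L.flatten.getLast? = some X ↔ L.getLast? = some [X] := by
  induction L using List.reverseRecOn with
  | nil => simp
  | append_singleton L w _ =>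
    have hw := hL w (by simp)
    obtain ⟨a, ha⟩ := Option.ne_none_iff_exists'.1
      (mt List.getLast?_eq_none_iff.1 (ne_nil_of_mem_tightWords hw))
    rw [List.flatten_append, List.flatten_singleton, List.getLast?_append, ha, Option.some_or,
      ← ha, getLast?_eq_some_X_iff hw]
    simp

/-- Locked parsings of `V` that may follow the word `u`. -/
def IsLockedParsingAfter (u V : PWord) (L : List PWord) : Prop :=
  (∀ w ∈ L, w ∈ tightWords) ∧ List.IsChain (fun u v => ¬Bad u v) (u :: L) ∧ L.flatten = V

noncomputable def lockValAfter (u V : PWord) : Polynomial ℤ :=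
  parsingSum (V.length + 1) (IsLockedParsingAfter u V)

theorem isLockedParsingAfter_iff_of_ne {u : PWord} (hu : u ≠ [X]) (V : PWord)
    (L : List PWord) : IsLockedParsingAfter u V L ↔ IsLockedParsing V L := by
  simp [IsLockedParsingAfter, IsLockedParsing, tightChain_iff, List.isChain_cons, Bad, hu,
    and_assoc]

theorem lockValAfter_of_ne {u : PWord} (hu : u ≠ [X]) (V : PWord) :
    lockValAfter u V = lockVal V :=
  parsingSum_congr (isLockedParsingAfter_iff_of_ne hu V) _

theorem lockVal_eq_lockValAfter_nil (V : PWord) : lockVal V = lockValAfter [] V :=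
  (lockValAfter_of_ne (by simp) V).symm

theorem isLockedParsingAfter_nil (u V : PWord) : IsLockedParsingAfter u V [] ↔ V = [] := by
  simp [IsLockedParsingAfter, eq_comm]

theorem isLockedParsingAfter_cons (u V w : PWord) (L : List PWord) :
    IsLockedParsingAfter u V (w :: L) ↔
      (w ∈ tightWords ∧ ¬Bad u w ∧ w <+: V) ∧
        IsLockedParsingAfter w (V.drop w.length) L := by
  simp only [IsLockedParsingAfter, List.forall_mem_cons, List.isChain_cons_cons,
    List.flatten_cons]
  constructor
  · rintro ⟨⟨hw, hL⟩, ⟨hb, hc⟩, rfl⟩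
    exact ⟨⟨hw, hb, List.prefix_append _ _⟩, hL, hc, List.drop_left.symm⟩
  · rintro ⟨⟨hw, hb, hp⟩, hL, hc, hV⟩
    refine ⟨⟨hw, hL⟩, ⟨hb, hc⟩, ?_⟩
    rw [hV, List.prefix_iff_eq_append.1 hp]

theorem length_le_of_isLockedParsingAfter {u V : PWord} {L : List PWord}
    (h : IsLockedParsingAfter u V L) : L.length ≤ V.length := by
  obtain ⟨hL, -, rfl⟩ := h
  induction L with
  | nil => simp
  | cons w L ih =>
    have := List.length_pos_iff.2 (ne_nil_of_mem_tightWords (hL w List.mem_cons_self))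
    have := ih fun v hv => hL v (List.mem_cons_of_mem _ hv)
    simp only [List.length_cons, List.flatten_cons, List.length_append]
    omega

theorem parsingSum_isLockedParsingAfter {u V : PWord} {n : ℕ} (hn : V.length < n) :
    parsingSum n (IsLockedParsingAfter u V) = lockValAfter u V :=
  parsingSum_eq_of_length_lt hn fun _ hL =>
    (length_le_of_isLockedParsingAfter hL).trans_lt (by omega)

theorem parsingSum_isLockedParsing {V : PWord} {n : ℕ} (hn : V.length < n) :
    parsingSum n (IsLockedParsing V) = lockVal V := by
  rw [← parsingSum_congr (isLockedParsingAfter_iff_of_ne (u := []) (by simp) V),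
    parsingSum_isLockedParsingAfter hn, lockVal_eq_lockValAfter_nil]

theorem lockValAfter_eq_sum (u V : PWord) :
    lockValAfter u V = (if V = [] then 1 else 0) +
      ∑ i : Fin 9, if wordOf i ∈ tightWords ∧ ¬Bad u (wordOf i) ∧ wordOf i <+: V then
        .C (tightCoeff (wordOf i)) * t ^ wordWt (wordOf i) *
          lockValAfter (wordOf i) (V.drop (wordOf i).length) else 0 := by
  rw [lockValAfter, parsingSum_succ]
  congr 1
  · simp [isLockedParsingAfter_nil]
  · refine Finset.sum_congr rfl fun i _ => ?_
    simp_rw [isLockedParsingAfter_cons]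
    split_ifs with h
    · have hw := List.length_pos_iff.2 (ne_nil_of_mem_tightWords h.1)
      have hV := h.2.2.length_le
      rw [parsingSum_congr (fun L => and_iff_right h),
        parsingSum_isLockedParsingAfter (by simp only [List.length_drop]; omega)]
    · rw [parsingSum_eq_zero (fun L hL => h hL.1), mul_zero]

noncomputable def lockValDrop (σ U : PWord) : Polynomial ℤ :=
  if σ <+: U then lockVal (U.drop σ.length) else 0

@[simp] theorem lockValDrop_nil (U : PWord) : lockValDrop [] U = lockVal U := by
  simp [lockValDrop]

@[simp] theorem lockValDrop_cons_nil (a : PLetter) (σ : PWord) :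
    lockValDrop (a :: σ) [] = 0 := by
  simp [lockValDrop]

@[simp] theorem lockValDrop_cons_cons (a b : PLetter) (σ U : PWord) :
    lockValDrop (a :: σ) (b :: U) = if a = b then lockValDrop σ U else 0 := by
  by_cases h : a = b <;> simp [lockValDrop, h]

theorem lockVal_eq (V : PWord) :
    lockVal V = (if V = [] then 1 else 0) + (if [X] <+: V then lockValAfter [X] (V.drop 1) else 0)
      + t * lockValDrop [X, A] V + t * lockValDrop [X, A, A] V + 2 * t * lockValDrop [A, X, A] V
      - t * lockValDrop [A, A, A] V - t * lockValDrop [B, A] V - t * lockValDrop [A, B, A] V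
      - t * lockValDrop [X, X, A] V := by
  rw [lockVal_eq_lockValAfter_nil, lockValAfter_eq_sum]
  simp [Fin.sum_univ_succ, wordOf, tightWords, Bad, tightCoeff, wordWt, lockValAfter_of_ne,
    lockValDrop, sub_eq_add_neg, neg_ite, add_assoc]

theorem lockValAfter_X_eq (V : PWord) :
    lockValAfter [X] V = (if V = [] then 1 else 0)
      + (if [X] <+: V then lockValAfter [X] (V.drop 1) else 0)
      + t * lockValDrop [X, A, A] V + 2 * t * lockValDrop [A, X, A] V
      - t * lockValDrop [A, A, A] V - t * lockValDrop [A, B, A] V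
      - t * lockValDrop [X, X, A] V := by
  rw [lockValAfter_eq_sum]
  simp [Fin.sum_univ_succ, wordOf, tightWords, Bad, tightCoeff, wordWt, lockValAfter_of_ne,
    lockValDrop, sub_eq_add_neg, neg_ite, add_assoc]

theorem lockValAfter_nil (u : PWord) : lockValAfter u [] = 1 := by
  rw [lockValAfter_eq_sum, if_pos rfl, add_eq_left]
  exact Finset.sum_eq_zero fun i _ =>
    if_neg fun h => ne_nil_of_mem_tightWords h.1 (List.prefix_nil.1 h.2.2)

theorem lockVal_nil : lockVal [] = 1 := by
  rw [lockVal_eq_lockValAfter_nil, lockValAfter_nil]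

theorem lockVal_cons_A (Z : PWord) :
    lockVal (A :: Z) =
      t * (2 * lockValDrop [X, A] Z - lockValDrop [A, A] Z - lockValDrop [B, A] Z) := by
  rw [lockVal_eq]
  simp only [reduceCtorEq, ↓reduceIte, List.cons_prefix_cons, List.nil_prefix, and_true, add_zero,
    lockValDrop_cons_cons, mul_zero, zero_add, sub_zero]
  ring

theorem lockValAfter_X_cons_A (Z : PWord) :
    lockValAfter [X] (A :: Z) = lockVal (A :: Z) := by
  rw [lockVal_eq, lockValAfter_X_eq]
  simp

theorem lockValAfter_X_cons_B (Z : PWord) : lockValAfter [X] (B :: Z) = 0 := by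
  rw [lockValAfter_X_eq]
  simp

theorem lockVal_cons_B (Z : PWord) : lockVal (B :: Z) = -(t * lockValDrop [A] Z) := by
  rw [lockVal_eq]
  simp

theorem lockValAfter_X_cons_X (Z : PWord) :
    lockValAfter [X] (X :: Z) =
      lockValAfter [X] Z + t * lockValDrop [A, A] Z - t * lockValDrop [X, A] Z := by
  rw [lockValAfter_X_eq]
  simp

theorem lockVal_cons_X (Z : PWord) :
    lockVal (X :: Z) = lockValAfter [X] Z + t * lockValDrop [A] Z + t * lockValDrop [A, A] Z
      - t * lockValDrop [X, A] Z := by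
  rw [lockVal_eq]
  simp

theorem core_eq_dropWhile_rdropWhile (s : PWord) :
    core s = (s.rdropWhile (· == X)).dropWhile (· == X) :=
  List.rdropWhile_dropWhile _ s

theorem length_core_le (s : PWord) : (core s).length ≤ s.length :=
  (List.rdropWhile_prefix _ _).length_le.trans (List.dropWhile_suffix _).length_le

theorem getLast?_core_ne (s : PWord) : (core s).getLast? ≠ some X := by
  intro h
  have hne : core s ≠ [] := fun h' => by simp [h'] at h
  rw [List.getLast?_eq_some_getLast hne, Option.some.injEq] at h
  exact List.rdropWhile_last_not (· == X) (s.dropWhile (· == X)) hne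
    (show (core s).getLast hne == X by rw [h]; rfl)

theorem core_eq_dropWhile {s : PWord} (h : s.getLast? ≠ some X) :
    core s = s.dropWhile (· == X) := by
  rw [core_eq_dropWhile_rdropWhile, List.rdropWhile_eq_self_iff.2]
  intro hs hX
  exact h (by simpa [List.getLast?_eq_some_getLast hs] using hX)

theorem rdropWhile_cons_of_ne {a : PLetter} (ha : a ≠ X) (V : PWord) :
    (a :: V).rdropWhile (· == X) = a :: V.rdropWhile (· == X) := by
  simp [List.rdropWhile_cons, ha]

theorem rdropWhile_X_cons (V : PWord) :
    (X :: V).rdropWhile (· == X) =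
      if V.rdropWhile (· == X) = [] then [] else X :: V.rdropWhile (· == X) := by
  simp only [List.rdropWhile_cons, beq_self_eq_true, true_and]

theorem core_cons_of_ne {a : PLetter} (ha : a ≠ X) (V : PWord) :
    core (a :: V) = a :: V.rdropWhile (· == X) := by
  simp [core_eq_dropWhile_rdropWhile, List.rdropWhile_cons, ha]

theorem isOpenParsing_nil (W : PWord) : IsOpenParsing W [] ↔ core W = [] := by
  simp [IsOpenParsing, tightChain_iff, eq_comm, show core [] = [] from rfl]

theorem mem_tightWords_of_isOpenParsing_cons {W w : PWord} {L : List PWord}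
    (h : IsOpenParsing W (w :: L)) : w ∈ tightWords ∧ w ≠ [X] :=
  ⟨h.1.1 w List.mem_cons_self, (h.2.2 (List.cons_ne_nil w L)).1⟩

theorem isOpenParsing_cons_iff {W w : PWord} (hw : w ∈ tightWords) (hX : w ≠ [X])
    (L : List PWord) :
    IsOpenParsing W (w :: L) ↔
      ¬Bad [X] w ∧ TightChain L ∧ w.dropWhile (· == X) ++ L.flatten = core W := by
  have hL : ∀ L' : List PWord, TightChain (w :: L') ↔ TightChain L' := fun L' => by
    simp [tightChain_iff, List.isChain_cons, Bad, hw, hX]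
  have hlast (hc : TightChain L) : (w :: L).getLast (List.cons_ne_nil w L) ≠ [X] ↔
      (w ++ L.flatten).getLast? ≠ some X := by
    rw [← List.flatten_cons, Ne, Ne, getLast?_flatten_eq_some_X_iff ((hL L).2 hc).1,
      List.getLast?_eq_some_getLast (List.cons_ne_nil w L), Option.some.injEq]
  have hdrop : (w ++ L.flatten).dropWhile (· == X) = w.dropWhile (· == X) ++ L.flatten := by
    rw [List.dropWhile_append, if_neg (by simpa using dropWhile_X_ne_nil hw hX)]
  simp only [IsOpenParsing, hL, List.flatten_cons, List.head_cons, Bad, true_and]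
  constructor
  · rintro ⟨hc, hcore, hh⟩
    obtain ⟨-, h1, h2, h3⟩ := hh (List.cons_ne_nil w L)
    refine ⟨by tauto, hc, ?_⟩
    rw [← hdrop, ← core_eq_dropWhile ((hlast hc).1 h3), hcore]
  · rintro ⟨hb, hc, hcore⟩
    -- the core of `W` never ends in `X`, so neither does `w ++ L.flatten`
    have hend : (w ++ L.flatten).getLast? ≠ some X := by
      rw [← List.getLast?_dropWhile (p := (· == X)), hdrop, hcore]
      · exact getLast?_core_ne W
      · simp [hdrop, dropWhile_X_ne_nil hw hX]
    exact ⟨hc, by rw [core_eq_dropWhile hend, hdrop, hcore],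
      fun _ => ⟨hX, by tauto, by tauto, (hlast hc).2 hend⟩⟩

theorem parsingSum_isOpenParsing_cons (W w : PWord) {n : ℕ} (hn : (core W).length < n) :
    parsingSum n (fun L => IsOpenParsing W (w :: L)) =
      if w ∈ tightWords ∧ w ≠ [X] ∧ ¬Bad [X] w then
        lockValDrop (w.dropWhile (· == X)) (core W) else 0 := by
  split_ifs with hw
  · obtain ⟨hw, hX, hb⟩ := hw
    simp only [isOpenParsing_cons_iff hw hX, hb, not_false_eq_true, true_and,
      List.append_eq_iff_prefix]
    rw [lockValDrop]
    split_ifs with hσ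
    · simp only [hσ, true_and]
      exact parsingSum_isLockedParsing (by simp only [List.length_drop]; omega)
    · exact parsingSum_eq_zero (by tauto) n
  · refine parsingSum_eq_zero (fun L hL => hw ?_) n
    obtain ⟨hw, hX⟩ := mem_tightWords_of_isOpenParsing_cons hL
    exact ⟨hw, hX, ((isOpenParsing_cons_iff hw hX L).1 hL).1⟩

/-- The first word of an open parsing is `XAA, AXA, AAA, ABA` or `XXA`; without its padding
`X`s it is `AA, AXA, AAA, ABA` or `A`. -/
noncomputable def openValOfCore (U : PWord) : Polynomial ℤ :=
  (if U = [] then 1 else 0) + t * lockValDrop [A, A] U + 2 * t * lockValDrop [A, X, A] U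
    - t * lockValDrop [A, A, A] U - t * lockValDrop [A, B, A] U - t * lockValDrop [A] U

theorem openVal_eq_openValOfCore (W : PWord) : openVal W = openValOfCore (core W) := by
  have hn : (core W).length < W.length + 2 := by have := length_core_le W; omega
  change parsingSum (W.length + 2 + 1) (IsOpenParsing W) = _
  rw [parsingSum_succ]
  simp only [parsingSum_isOpenParsing_cons W _ hn, isOpenParsing_nil]
  simp [Fin.sum_univ_succ, wordOf, tightWords, Bad, tightCoeff, wordWt, openValOfCore,
    sub_eq_add_neg, add_assoc]

theorem openValOfCore_dropWhile_eq_lockValAfter_X (Z : PWord) :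
    openValOfCore (Z.dropWhile (· == X)) =
      lockValAfter [X] Z - t * lockValDrop [A] Z + t * lockValDrop [A, A] Z
        - t * lockValDrop [X, A] Z := by
  induction Z with
  | nil => simp [openValOfCore, lockValAfter_nil]
  | cons a Z ih =>
    cases a with
    | A =>
      simp only [openValOfCore, beq_iff_eq, reduceCtorEq, not_false_eq_true,
        List.dropWhile_cons_of_neg, ↓reduceIte, lockValDrop_cons_cons, lockValDrop_nil, zero_add,
        lockValAfter_X_cons_A, lockVal_cons_A, mul_zero, sub_zero]
      ring
    | B => simp [openValOfCore, lockValAfter_X_cons_B]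
    | X =>
      simp only [BEq.rfl, List.dropWhile_cons_of_pos, ih, lockValAfter_X_cons_X,
        lockValDrop_cons_cons, reduceCtorEq, ↓reduceIte, mul_zero, sub_zero, add_zero]
      ring

theorem openValOfCore_dropWhile_eq_lockVal (Z : PWord) :
    openValOfCore (Z.dropWhile (· == X)) =
      lockVal Z - lockVal (A :: Z) - t * lockValDrop [A] Z := by
  cases Z with
  | nil => simp [openValOfCore, lockVal_nil, lockVal_cons_A]
  | cons a Z =>
    cases a with
    | A =>
      simp only [openValOfCore, beq_iff_eq, reduceCtorEq, not_false_eq_true,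
        List.dropWhile_cons_of_neg, ↓reduceIte, lockValDrop_cons_cons, lockValDrop_nil,
        lockVal_cons_A]
      ring
    | B => simp [openValOfCore, lockVal_cons_B, lockVal_cons_A]
    | X =>
      simp only [BEq.rfl, List.dropWhile_cons_of_pos, openValOfCore_dropWhile_eq_lockValAfter_X,
        lockVal_cons_X, lockVal_cons_A, lockValDrop_cons_cons, ↓reduceIte, reduceCtorEq]
      ring

theorem openValOfCore_AAA (Z : PWord) :
    openValOfCore (A :: A :: A :: Z) + t * openValOfCore (Z.dropWhile (· == X)) = 0 := by
  rw [openValOfCore_dropWhile_eq_lockVal]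
  simp only [openValOfCore, lockValDrop_cons_cons, lockValDrop_nil, lockVal_cons_A, reduceCtorEq,
    ↓reduceIte]
  ring

theorem openValOfCore_AAX (Z : PWord) :
    openValOfCore (A :: A :: X :: Z) - t * openValOfCore (Z.dropWhile (· == X)) = 0 := by
  rw [openValOfCore_dropWhile_eq_lockValAfter_X]
  simp only [openValOfCore, lockValDrop_cons_cons, lockValDrop_nil, lockVal_cons_A, lockVal_cons_X,
    reduceCtorEq, ↓reduceIte]
  ring

theorem openValOfCore_AXX (Z : PWord) :
    openValOfCore (A :: X :: X :: Z) + t * openValOfCore (Z.dropWhile (· == X)) = 0 := by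
  rw [openValOfCore_dropWhile_eq_lockValAfter_X]
  simp only [openValOfCore, lockValDrop_cons_cons, lockValDrop_nil, lockVal_cons_X,
    lockValAfter_X_cons_X, reduceCtorEq, ↓reduceIte]
  ring

theorem openValOfCore_AXA (Z : PWord) :
    openValOfCore (A :: X :: A :: Z) - t * openValOfCore (A :: Z)
      - 2 * t * openValOfCore (Z.dropWhile (· == X)) = 0 := by
  rw [openValOfCore_dropWhile_eq_lockVal]
  simp only [openValOfCore, lockValDrop_cons_cons, lockValDrop_nil, lockVal_cons_A, lockVal_cons_X,
    lockValAfter_X_cons_A, reduceCtorEq, ↓reduceIte]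
  ring

theorem openValOfCore_ABA (Z : PWord) :
    openValOfCore (A :: B :: A :: Z) + t * openValOfCore (A :: Z)
      + t * openValOfCore (Z.dropWhile (· == X)) = 0 := by
  rw [openValOfCore_dropWhile_eq_lockVal]
  simp only [openValOfCore, lockValDrop_cons_cons, lockValDrop_nil, lockVal_cons_A, lockVal_cons_B,
    reduceCtorEq, ↓reduceIte]
  ring

end TightPuzzle

open PLetter in
/-- **Left identities** for open values in the tight puzzle. -/
theorem left_identities (W : PWord) :
    openVal ([A, A, A] ++ W) + Polynomial.X * openVal W = 0 ∧
    openVal ([A, A, X] ++ W) - Polynomial.X * openVal W = 0 ∧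
    openVal ([A, X, X] ++ W) + Polynomial.X * openVal W = 0 ∧
    openVal ([A, X, A] ++ W) - Polynomial.X * openVal ([A] ++ W)
      - 2 * Polynomial.X * openVal W = 0 ∧
    openVal ([A, B, A] ++ W) + Polynomial.X * openVal ([A] ++ W)
      + Polynomial.X * openVal W = 0 := by
  open TightPuzzle in
  simp only [openVal_eq_openValOfCore, List.cons_append, List.nil_append,
    core_cons_of_ne (show A ≠ X by decide), core_eq_dropWhile_rdropWhile W,
    rdropWhile_cons_of_ne (show A ≠ X by decide), rdropWhile_cons_of_ne (show B ≠ X by decide),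
    rdropWhile_X_cons]
  refine ⟨openValOfCore_AAA _, ?_, ?_, openValOfCore_AXA _, openValOfCore_ABA _⟩
  -- when `W` consists of `X`s only, the trailing `X`s of `AAXW` and `AXXW` are padding too
  all_goals by_cases hZ : W.rdropWhile (· == X) = []
  · simp [hZ, openValOfCore, lockVal_nil, lockVal_cons_A]
  · rw [if_neg hZ]
    exact openValOfCore_AAX _
  · simp [hZ, openValOfCore, lockVal_nil]
  · rw [if_neg hZ, if_neg (List.cons_ne_nil _ _)]
    exact openValOfCore_AXX _
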